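/- arXiv:1710.06968 — 2 statements merged into one kernel-verified Lean document; each statement's English description precedes it below -/
import Mathlib

section
/- Let δ: G → W satisfy (WG1) and (WG2). Let g, h ∈ G be composable edges with δ(g) = s and δ(h) = t, where s, t ∈ S and s ≠ t. Then δ(gh) = st. -/
open CategoryTheory List

variable {B : Type*} {W : Type*} [Group W] {M : CoxeterMatrix B}
variable {G : Type*} [Groupoid G]

/-- The Bruhat order on a Coxeter group, defined via the subword property:
`v ≤ w` iff some reduced word for `w` has a sublist with product `v`. -/
def BruhatLE (cs : CoxeterSystem M W) (v w : W) : Prop :=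
  ∃ ω : List B, cs.IsReduced ω ∧ cs.wordProd ω = w ∧
    ∃ ω' : List B, ω'.Sublist ω ∧ cs.wordProd ω' = v

/-- (WG1): `δ` of every identity edge is `1`. -/
def WG1 (δ : ∀ ⦃x y : G⦄, (x ⟶ y) → W) : Prop :=
  ∀ x : G, δ (𝟙 x) = 1

/-- (WG2): the triangle inequality `δ(gh) ≥ δ(g)δ(h)` in the Bruhat order. -/
def WG2 (cs : CoxeterSystem M W) (δ : ∀ ⦃x y : G⦄, (x ⟶ y) → W) : Prop :=
  ∀ ⦃x y z : G⦄ (g : x ⟶ y) (h : y ⟶ z), BruhatLE cs (δ g * δ h) (δ (g ≫ h))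

/-- (WG2'): the local triangle inequality. -/
def WG2' (cs : CoxeterSystem M W) (δ : ∀ ⦃x y : G⦄, (x ⟶ y) → W) : Prop :=
  ∀ ⦃x y z : G⦄ (g : x ⟶ y) (h : x ⟶ z) (i : B), δ (Groupoid.inv g ≫ h) = cs.simple i →
    (cs.IsRightDescent (δ g) i → δ h = δ g ∨ δ h = δ g * cs.simple i) ∧
    (¬ cs.IsRightDescent (δ g) i → δ h = δ g * cs.simple i)

/-- (WG3): the geodesic extension property. -/
def WG3 (cs : CoxeterSystem M W) (δ : ∀ ⦃x y : G⦄, (x ⟶ y) → W) : Prop :=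
  ∀ ⦃x y : G⦄ (g : x ⟶ y) (i : B), cs.IsRightDescent (δ g) i →
    ∃ (z : G) (h : x ⟶ z), δ (Groupoid.inv h ≫ g) = cs.simple i ∧ δ h = δ g * cs.simple i

/-- `δ` is weak: from every chamber there issues an edge of each simple length. -/
def WeakFn (cs : CoxeterSystem M W) (δ : ∀ ⦃x y : G⦄, (x ⟶ y) → W) : Prop :=
  ∀ (x : G) (i : B), ∃ (y : G) (g : x ⟶ y), δ g = cs.simple i

/-- The list of `W`-lengths of the edges of a path (a potential gallery). -/
def pathWord (δ : ∀ ⦃x y : G⦄, (x ⟶ y) → W) : ∀ {x y : G}, Quiver.Path x y → List W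
  | _, _, Quiver.Path.nil => []
  | _, _, Quiver.Path.cons p e => pathWord δ p ++ [δ e]

namespace BruhatLE

variable {cs : CoxeterSystem M W}

theorem length_le {v w : W} (hvw : BruhatLE cs v w) : cs.length v ≤ cs.length w := by
  obtain ⟨ω, hred, rfl, ω', hsub, rfl⟩ := hvw
  calc cs.length (cs.wordProd ω') ≤ ω'.length := cs.length_wordProd_le ω'
    _ ≤ ω.length := hsub.length_le
    _ = cs.length (cs.wordProd ω) := hred.symm

theorem eq_one_of_le_one {v : W} (hv : BruhatLE cs v 1) : v = 1 :=
  cs.length_eq_zero_iff.mp (Nat.le_zero.mp (cs.length_one ▸ hv.length_le))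

theorem eq_one_or_eq_simple {v : W} {i : B} (hv : BruhatLE cs v (cs.simple i)) :
    v = 1 ∨ v = cs.simple i := by
  obtain ⟨ω, hred, hω, ω', hsub, rfl⟩ := hv
  have hlen : ω.length = 1 := by
    rw [CoxeterSystem.IsReduced, hω, cs.length_simple] at hred
    exact hred.symm
  obtain ⟨b, rfl⟩ := List.length_eq_one_iff.mp hlen
  rcases List.sublist_singleton.mp hsub with rfl | rfl
  · exact Or.inl cs.wordProd_nil
  · exact Or.inr hω

end BruhatLE

section WG

variable {cs : CoxeterSystem M W} {δ : ∀ ⦃x y : G⦄, (x ⟶ y) → W}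

theorem map_inv_of_WG (h1 : WG1 δ) (h2 : WG2 cs δ) {x y : G} (f : x ⟶ y) :
    δ (Groupoid.inv f) = (δ f)⁻¹ := by
  have hle := h2 f (Groupoid.inv f)
  rw [Groupoid.comp_inv, h1] at hle
  exact (inv_eq_of_mul_eq_one_right hle.eq_one_of_le_one).symm

theorem bruhatLE_map_comp_mul_inv (h1 : WG1 δ) (h2 : WG2 cs δ) {x y z : G}
    (g : x ⟶ y) (h : y ⟶ z) : BruhatLE cs (δ (g ≫ h) * (δ h)⁻¹) (δ g) := by
  have hle := h2 (g ≫ h) (Groupoid.inv h)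
  rwa [Category.assoc, Groupoid.comp_inv, Category.comp_id, map_inv_of_WG h1 h2] at hle

end WG

/-- If `δ` satisfies (WG1) and (WG2), and `g`, `h` are composable edges with
`δ(g) = s`, `δ(h) = t` distinct simple reflections, then `δ(gh) = st`. -/
theorem stmt4 (cs : CoxeterSystem M W) (δ : ∀ ⦃x y : G⦄, (x ⟶ y) → W)
    (h1 : WG1 δ) (h2 : WG2 cs δ) ⦃x y z : G⦄ (g : x ⟶ y) (h : y ⟶ z) (i j : B)
    (hg : δ g = cs.simple i) (hh : δ h = cs.simple j) (hne : cs.simple i ≠ cs.simple j) :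
    δ (g ≫ h) = cs.simple i * cs.simple j := by
  have hle := bruhatLE_map_comp_mul_inv h1 h2 g h
  rw [hg, hh, cs.inv_simple] at hle
  rcases hle.eq_one_or_eq_simple with hone | hsi
  · -- then `δ(gh) = t`, and (WG2) for `g, h` would put `st` below the simple reflection `t`
    have hgh : δ (g ≫ h) = cs.simple j := by
      simpa only [cs.inv_simple] using eq_inv_of_mul_eq_one_left hone
    have hst := h2 g h
    rw [hg, hh, hgh] at hst
    rcases hst.eq_one_or_eq_simple with hst | hst
    · exact absurd (by simpa only [cs.inv_simple] using eq_inv_of_mul_eq_one_left hst) hne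
    · have hi : cs.simple i = 1 := mul_eq_right.mp hst
      have := cs.length_simple i
      rw [hi, cs.length_one] at this
      exact absurd this zero_ne_one
  · exact eq_mul_of_mul_inv_eq (by rwa [cs.inv_simple])
end

section
/- Let (Δ, δ) be a building of type W. Define G to be the connected simply connected groupoid with vertex set Δ (i.e., exactly one edge between any ordered pair of vertices), and define δ': G → W by δ'(g) = δ(ι(g), τ(g)). Then δ': G → W is a strict W-groupoid: it is weak and satisfies (WG1), (WG2), (WG3), and δ'(g) = 1 implies g is an identity edge. -/
open List

variable {B : Type*} {W : Type*} [Group W] {M : CoxeterMatrix B}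

variable {Δ : Type*}

/-- (WD1): `δ(C,D) = 1` iff `C = D`. -/
def WD1 (d : Δ → Δ → W) : Prop := ∀ C D : Δ, d C D = 1 ↔ C = D

/-- (WD2): if `δ(C,D) = w` and `δ(D,D') = s ∈ S`, then `δ(C,D') ∈ {ws, w}` if
`ws < w`, and `δ(C,D') = ws` if `ws > w`. -/
def WD2 (cs : CoxeterSystem M W) (d : Δ → Δ → W) : Prop :=
  ∀ (C D D' : Δ) (i : B), d D D' = cs.simple i →
    (cs.IsRightDescent (d C D) i → d C D' = d C D * cs.simple i ∨ d C D' = d C D) ∧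
    (¬ cs.IsRightDescent (d C D) i → d C D' = d C D * cs.simple i)

/-- (WD3): for all `C, D` and `s ∈ S` there is `D'` with `δ(D,D') = s` and
`δ(C,D') = δ(C,D)s`. -/
def WD3 (cs : CoxeterSystem M W) (d : Δ → Δ → W) : Prop :=
  ∀ (C D : Δ) (i : B), ∃ D' : Δ, d D D' = cs.simple i ∧ d C D' = d C D * cs.simple i

/-!
Strong exchange comes from the action of `W` on `W × {±1}` in which `s` sends `(t, ε)` to
`(s t s, ε)`, flipping `ε` exactly when `t = s`. The sign `reflSign w t` that `w` puts on
`(t, 1)` is the parity of the number of occurrences of `t` in the right inversion sequence of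
any word for `w`, and it is `-1` exactly when `ℓ(w t) < ℓ(w)`; such a `t` can therefore be
deleted from every word for `w`.

In the building, `δ(X, D) = δ(X, C) δ(C, D)` whenever the lengths add up, which gives
`δ(D, C) = δ(C, D)⁻¹`. The Bruhat inequality `δ(C, D) δ(D, E) ≤ δ(C, E)` follows by induction
on `ℓ(δ(D, E))`: a left descent `s` of `δ(D, E)` is the type of the first panel `D D₁` of a
minimal gallery to `E`, and by (WD2) `δ(C, D₁)` is either `δ(C, D) s`, which is the induction
step, or `δ(C, D)`; in the second case `δ(C, D) δ(D, E)` is obtained from `δ(C, D) s δ(D, E)`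
by a reflection that shortens it, and strong exchange deletes that reflection from a subword.
-/

namespace CoxeterSystem

variable (cs : CoxeterSystem M W)

lemma simple_ne_one (i : B) : cs.simple i ≠ 1 := fun h => by
  simpa using congrArg cs.length h

lemma simple_mul_mul_simple_eq_simple_iff {i : B} {t : W} :
    cs.simple i * t * cs.simple i = cs.simple i ↔ t = cs.simple i := by
  rw [mul_assoc, mul_eq_left, mul_eq_one_iff_eq_inv, inv_simple]

open Classical in
noncomputable def simpleSignPerm (i : B) : Equiv.Perm (W × ℤˣ) :=
  Function.Involutive.toPerm
    (fun x => (cs.simple i * x.1 * cs.simple i, if x.1 = cs.simple i then -x.2 else x.2))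
    (by
      rintro ⟨t, ε⟩
      simp only [cs.simple_mul_mul_simple_eq_simple_iff, Prod.mk.injEq]
      exact ⟨by simp [mul_assoc], by split_ifs <;> simp⟩)

open Classical in
lemma simpleSignPerm_apply (i : B) (t : W) (ε : ℤˣ) :
    cs.simpleSignPerm i (t, ε) =
      (cs.simple i * t * cs.simple i, if t = cs.simple i then -ε else ε) := rfl

open Classical in
lemma prod_map_simpleSignPerm_apply (ω : List B) (t : W) (ε : ℤˣ) :
    (ω.map cs.simpleSignPerm).prod (t, ε) =
      (cs.wordProd ω * t * (cs.wordProd ω)⁻¹, ε * (-1) ^ (cs.rightInvSeq ω).count t) := by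
  induction ω generalizing t ε with
  | nil => simp
  | cons i ω ih =>
    have hconj : cs.wordProd ω * t * (cs.wordProd ω)⁻¹ = cs.simple i ↔
        (cs.wordProd ω)⁻¹ * cs.simple i * cs.wordProd ω = t := by
      constructor <;> intro h <;> rw [← h] <;> group
    rw [List.map_cons, List.prod_cons, Equiv.Perm.mul_apply, ih, simpleSignPerm_apply]
    simp only [wordProd_cons, rightInvSeq, List.count_cons, beq_iff_eq, hconj, mul_inv_rev,
      inv_simple, pow_add]
    refine Prod.ext (by group) ?_
    split_ifs <;> simp

lemma inv_pow_mul_simple_mul_pow (i j : B) (a b : ℕ) :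
    ((cs.simple i * cs.simple j) ^ a)⁻¹ * cs.simple j * (cs.simple i * cs.simple j) ^ b =
      ((cs.simple i * cs.simple j) ^ (a + b))⁻¹ * cs.simple j := by
  have hconj : cs.simple j * (cs.simple i * cs.simple j) * (cs.simple j)⁻¹ =
      (cs.simple i * cs.simple j)⁻¹ := by
    simp [mul_assoc]
  have hb : cs.simple j * (cs.simple i * cs.simple j) ^ b =
      ((cs.simple i * cs.simple j) ^ b)⁻¹ * cs.simple j := by
    rw [← inv_pow, ← hconj, conj_pow, inv_simple, mul_assoc, simple_mul_simple_self, mul_one]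
  rw [mul_assoc, hb, ← mul_assoc, ← mul_inv_rev, ← pow_add, add_comm b]

lemma wordProd_flatten_replicate_pair (i j : B) (k : ℕ) :
    cs.wordProd (List.replicate k [i, j]).flatten = (cs.simple i * cs.simple j) ^ k := by
  simp [wordProd, List.map_flatten, List.prod_flatten, List.map_replicate, List.prod_replicate]

lemma rightInvSeq_flatten_replicate_pair (i j : B) (k : ℕ) :
    cs.rightInvSeq (List.replicate k [i, j]).flatten =
      ((List.range (2 * k)).map
        fun n => ((cs.simple i * cs.simple j) ^ n)⁻¹ * cs.simple j).reverse := by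
  induction k with
  | zero => rfl
  | succ k ih =>
    have hfirst : (cs.simple j * (cs.simple i * cs.simple j) ^ k)⁻¹ * cs.simple i *
        (cs.simple j * (cs.simple i * cs.simple j) ^ k) =
        ((cs.simple i * cs.simple j) ^ k)⁻¹ * cs.simple j *
          (cs.simple i * cs.simple j) ^ (k + 1) := by
      simp only [mul_inv_rev, inv_simple, pow_succ', mul_assoc]
    rw [List.replicate_succ, List.flatten_cons, List.cons_append, List.cons_append,
      List.nil_append, show 2 * (k + 1) = 2 * k + 1 + 1 by ring]
    simp only [rightInvSeq, ih, wordProd_cons, wordProd_flatten_replicate_pair, List.range_succ,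
      List.map_append, List.reverse_append, List.map_cons, List.map_nil, List.reverse_singleton,
      List.cons_append, List.nil_append, hfirst, inv_pow_mul_simple_mul_pow]
    rw [← add_assoc, ← two_mul]

open Classical in
lemma isLiftable_simpleSignPerm : M.IsLiftable cs.simpleSignPerm := by
  intro i j
  have hword : (cs.simpleSignPerm i * cs.simpleSignPerm j) ^ M i j =
      ((List.replicate (M i j) [i, j]).flatten.map cs.simpleSignPerm).prod := by
    simp [List.map_flatten, List.prod_flatten, List.map_replicate, List.prod_replicate]
  have hperiodic : ∀ n, ((cs.simple i * cs.simple j) ^ (M i j + n))⁻¹ * cs.simple j =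
      ((cs.simple i * cs.simple j) ^ n)⁻¹ * cs.simple j := by
    simp [pow_add]
  ext ⟨t, ε⟩ : 1
  -- `(s i * s j) ^ M i j = 1`, so the inversion list repeats itself and every count is even
  rw [hword, prod_map_simpleSignPerm_apply, wordProd_flatten_replicate_pair,
    rightInvSeq_flatten_replicate_pair, cs.simple_mul_simple_pow, List.count_reverse, two_mul,
    List.range_add, List.map_append, List.map_map]
  simp [Function.comp_def, hperiodic, ← two_mul, pow_mul]

noncomputable def signRep : W →* Equiv.Perm (W × ℤˣ) :=
  cs.lift ⟨cs.simpleSignPerm, cs.isLiftable_simpleSignPerm⟩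

noncomputable def reflSign (w t : W) : ℤˣ := (cs.signRep w (t, 1)).2

open Classical in
lemma signRep_wordProd_apply (ω : List B) (t : W) (ε : ℤˣ) :
    cs.signRep (cs.wordProd ω) (t, ε) =
      (cs.wordProd ω * t * (cs.wordProd ω)⁻¹, ε * (-1) ^ (cs.rightInvSeq ω).count t) := by
  rw [← prod_map_simpleSignPerm_apply, wordProd, map_list_prod, List.map_map]
  congr 3
  funext i
  exact cs.lift_apply_simple cs.isLiftable_simpleSignPerm i

open Classical in
lemma reflSign_wordProd (ω : List B) (t : W) :
    cs.reflSign (cs.wordProd ω) t = (-1) ^ (cs.rightInvSeq ω).count t := by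
  rw [reflSign, signRep_wordProd_apply, one_mul]

lemma signRep_apply (w t : W) (ε : ℤˣ) :
    cs.signRep w (t, ε) = (w * t * w⁻¹, ε * cs.reflSign w t) := by
  obtain ⟨ω, rfl⟩ := cs.wordProd_surjective w
  rw [reflSign_wordProd, signRep_wordProd_apply]

lemma reflSign_mul (v w t : W) :
    cs.reflSign (v * w) t = cs.reflSign v (w * t * w⁻¹) * cs.reflSign w t := by
  rw [reflSign, map_mul, Equiv.Perm.mul_apply, signRep_apply, signRep_apply, one_mul, mul_comm]

lemma reflSign_one (t : W) : cs.reflSign 1 t = 1 := by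
  simpa using cs.reflSign_wordProd [] t

lemma reflSign_simple_simple (i : B) : cs.reflSign (cs.simple i) (cs.simple i) = -1 := by
  simpa using cs.reflSign_wordProd [i] (cs.simple i)

lemma IsReflection.reflSign_self {t : W} (ht : cs.IsReflection t) : cs.reflSign t t = -1 := by
  obtain ⟨u, i, rfl⟩ := ht
  have hs : u⁻¹ * (u * cs.simple i * u⁻¹) * u⁻¹⁻¹ = cs.simple i := by group
  have hcancel := cs.reflSign_mul u u⁻¹ (u * cs.simple i * u⁻¹)
  rw [mul_inv_cancel, reflSign_one, hs] at hcancel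
  rw [reflSign_mul, reflSign_mul, hs, inv_simple, simple_mul_simple_cancel_right,
    reflSign_simple_simple, mul_right_comm, ← hcancel, one_mul]

lemma reflSign_eq_one_of_length_lt {w t : W} (h : cs.length w < cs.length (w * t)) :
    cs.reflSign w t = 1 := by
  classical
  obtain ⟨ω, hω, rfl⟩ := cs.exists_isReduced w
  have hnotmem : t ∉ cs.rightInvSeq ω := fun hmem =>
    (cs.isRightInversion_of_mem_rightInvSeq hω hmem).2.not_gt h
  rw [reflSign_wordProd, List.count_eq_zero.mpr hnotmem, pow_zero]

lemma reflSign_eq_neg_one_iff {w t : W} (ht : cs.IsReflection t) :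
    cs.reflSign w t = -1 ↔ cs.length (w * t) < cs.length w := by
  refine ⟨fun h => ?_, fun h => ?_⟩
  · by_contra hge
    have hlt : cs.length w < cs.length (w * t) :=
      lt_of_le_of_ne (not_lt.mp hge) (ht.length_mul_left_ne w).symm
    rw [reflSign_eq_one_of_length_lt cs hlt] at h
    exact absurd h (by decide)
  · have hw : w * t * t = w := by rw [mul_assoc, ht.mul_self, mul_one]
    have hlt : cs.length (w * t) < cs.length (w * t * t) := hw.symm ▸ h
    rw [← hw, reflSign_mul, ht.inv, ht.mul_self, one_mul, ht.reflSign_self,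
      reflSign_eq_one_of_length_lt cs hlt, one_mul]

lemma mem_rightInvSeq_of_length_mul_lt (ω : List B) {t : W} (ht : cs.IsReflection t)
    (h : cs.length (cs.wordProd ω * t) < cs.length (cs.wordProd ω)) :
    t ∈ cs.rightInvSeq ω := by
  classical
  have hsign := (cs.reflSign_eq_neg_one_iff ht).mpr h
  rw [reflSign_wordProd] at hsign
  by_contra hnotmem
  rw [List.count_eq_zero.mpr hnotmem, pow_zero] at hsign
  exact absurd hsign (by decide)

lemma exists_wordProd_eraseIdx_eq_mul (ω : List B) {t : W} (ht : cs.IsReflection t)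
    (h : cs.length (cs.wordProd ω * t) < cs.length (cs.wordProd ω)) :
    ∃ j, cs.wordProd (ω.eraseIdx j) = cs.wordProd ω * t := by
  obtain ⟨j, hj, rfl⟩ := List.mem_iff_getElem.mp (cs.mem_rightInvSeq_of_length_mul_lt ω ht h)
  exact ⟨j, by rw [← wordProd_mul_getD_rightInvSeq, List.getD_eq_getElem _ _ hj]⟩

lemma length_mul_lt_length_mul_simple_mul {u w : W} {i : B} (hu : cs.IsRightDescent u i)
    (hw : cs.IsLeftDescent w i) : cs.length (u * w) < cs.length (u * cs.simple i * w) := by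
  set t := w⁻¹ * cs.simple i * w with ht_def
  have ht : cs.IsReflection t := ⟨w⁻¹, i, by rw [inv_inv]⟩
  have hut : u * w * t = u * cs.simple i * w := by rw [ht_def]; group
  have hwt : w * t = cs.simple i * w := by rw [ht_def]; group
  have hsign : cs.reflSign (u * w) t = 1 := by
    rw [reflSign_mul, show w * t * w⁻¹ = cs.simple i by rw [ht_def]; group,
      (cs.reflSign_eq_neg_one_iff (cs.isReflection_simple i)).mpr hu,
      (cs.reflSign_eq_neg_one_iff ht).mpr (hwt ▸ hw), Int.units_mul_self]
  rw [← hut]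
  refine lt_of_le_of_ne (not_lt.mp fun hlt => ?_) (ht.length_mul_left_ne _).symm
  rw [(cs.reflSign_eq_neg_one_iff ht).mpr hlt] at hsign
  exact absurd hsign (by decide)

end CoxeterSystem

lemma bruhatLE_refl (cs : CoxeterSystem M W) (w : W) : BruhatLE cs w w := by
  obtain ⟨ω, hω, rfl⟩ := cs.exists_isReduced w
  exact ⟨ω, hω, rfl, ω, List.Sublist.refl ω, rfl⟩

lemma BruhatLE.mul_of_length_mul_lt {cs : CoxeterSystem M W} {v w t : W} (h : BruhatLE cs v w)
    (ht : cs.IsReflection t) (hlt : cs.length (v * t) < cs.length v) :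
    BruhatLE cs (v * t) w := by
  obtain ⟨ω, hω, hωw, ω', hsub, rfl⟩ := h
  obtain ⟨j, hj⟩ := cs.exists_wordProd_eraseIdx_eq_mul ω' ht hlt
  exact ⟨ω, hω, hωw, ω'.eraseIdx j, (List.eraseIdx_sublist ω' j).trans hsub, hj⟩

section Building

variable {cs : CoxeterSystem M W} {d : Δ → Δ → W}

lemma dist_swap_of_eq_simple (hd1 : WD1 d) (hd2 : WD2 cs d) {D D' : Δ} {i : B}
    (h : d D D' = cs.simple i) : d D' D = cs.simple i := by
  obtain ⟨hdesc, hasc⟩ := hd2 D' D D' i h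
  rw [(hd1 D' D').mpr rfl] at hdesc hasc
  have hne : d D' D ≠ 1 := fun h1 => by
    obtain rfl := (hd1 D' D).mp h1
    exact cs.simple_ne_one i (h.symm.trans h1)
  have hx : d D' D * cs.simple i = 1 := by
    by_cases hc : cs.IsRightDescent (d D' D) i
    · exact ((hdesc hc).resolve_right fun h1 => hne h1.symm).symm
    · exact (hasc hc).symm
  rw [mul_eq_one_iff_eq_inv.mp hx, cs.inv_simple]

lemma dist_eq_mul_of_length_mul (hd1 : WD1 d) (hd2 : WD2 cs d) (hd3 : WD3 cs d) {X C D : Δ}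
    (hlen : cs.length (d X C * d C D) = cs.length (d X C) + cs.length (d C D)) :
    d X D = d X C * d C D := by
  induction hn : cs.length (d C D) generalizing D with
  | zero =>
    obtain rfl : C = D := (hd1 C D).mp (cs.length_eq_zero_iff.mp hn)
    rw [(hd1 C C).mpr rfl, mul_one]
  | succ n ih =>
    obtain ⟨i, hi⟩ := cs.exists_rightDescent_of_ne_one (w := d C D) fun h1 => by simp [h1] at hn
    obtain ⟨D', hDD', hCD'⟩ := hd3 C D i
    have hshorter := cs.isRightDescent_iff.mp hi
    have hle := cs.length_mul_le (d X C) (d C D * cs.simple i)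
    have hge := cs.length_mul_le (d X C * d C D * cs.simple i) (cs.simple i)
    rw [← mul_assoc] at hle
    rw [mul_assoc _ (cs.simple i), cs.simple_mul_simple_self, mul_one, cs.length_simple] at hge
    have hXD' : d X D' = d X C * d C D * cs.simple i := by
      have := @ih D'
      rw [hCD', ← mul_assoc] at this
      exact this (by omega) (by omega)
    have hasc : ¬ cs.IsRightDescent (d X D') i := by
      rw [hXD', CoxeterSystem.IsRightDescent, mul_assoc _ (cs.simple i),
        cs.simple_mul_simple_self, mul_one]
      omega
    rw [(hd2 X D' D i (dist_swap_of_eq_simple hd1 hd2 hDD')).2 hasc, hXD',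
      mul_assoc _ (cs.simple i), cs.simple_mul_simple_self, mul_one]

lemma dist_swap (hd1 : WD1 d) (hd2 : WD2 cs d) (hd3 : WD3 cs d) (C D : Δ) :
    d D C = (d C D)⁻¹ := by
  induction hn : cs.length (d C D) generalizing D with
  | zero =>
    obtain rfl : C = D := (hd1 C D).mp (cs.length_eq_zero_iff.mp hn)
    rw [(hd1 C C).mpr rfl, inv_one]
  | succ n ih =>
    obtain ⟨i, hi⟩ := cs.exists_rightDescent_of_ne_one (w := d C D) fun h1 => by simp [h1] at hn
    obtain ⟨D', hDD', hCD'⟩ := hd3 C D i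
    have hshorter := cs.isRightDescent_iff.mp hi
    have hD'C : d D' C = cs.simple i * (d C D)⁻¹ := by
      rw [ih D' (by rw [hCD']; omega), hCD', mul_inv_rev, cs.inv_simple]
    have hlen : cs.length (d D D' * d D' C) = cs.length (d D D') + cs.length (d D' C) := by
      rw [hDD', hD'C, cs.simple_mul_simple_cancel_left, cs.length_simple, ← cs.inv_simple,
        ← mul_inv_rev, cs.length_inv, cs.length_inv]
      omega
    rw [dist_eq_mul_of_length_mul hd1 hd2 hd3 hlen, hDD', hD'C, cs.simple_mul_simple_cancel_left]

lemma bruhatLE_dist_mul_dist (hd1 : WD1 d) (hd2 : WD2 cs d) (hd3 : WD3 cs d) (C D E : Δ) :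
    BruhatLE cs (d C D * d D E) (d C E) := by
  induction hn : cs.length (d D E) using Nat.strong_induction_on generalizing D with
  | _ n ih =>
  by_cases h1 : d D E = 1
  · obtain rfl : D = E := (hd1 D E).mp h1
    rw [h1, mul_one]
    exact bruhatLE_refl cs (d C D)
  obtain ⟨i, hi⟩ := cs.exists_leftDescent_of_ne_one h1
  obtain ⟨D₁, hDD₁, hED₁⟩ := hd3 E D i
  have hD₁E : d D₁ E = cs.simple i * d D E := by
    rw [dist_swap hd1 hd2 hd3 E D₁, hED₁, dist_swap hd1 hd2 hd3 D E, mul_inv_rev, inv_inv,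
      cs.inv_simple]
  have hshorter : cs.length (d D₁ E) < n := by rw [hD₁E, ← hn]; exact hi
  have IH := ih _ hshorter D₁ rfl
  rw [hD₁E] at IH
  have hstep : d C D₁ = d C D * cs.simple i → BruhatLE cs (d C D * d D E) (d C E) := by
    intro hC
    rwa [hC, mul_assoc, cs.simple_mul_simple_cancel_left] at IH
  obtain ⟨hdesc, hasc⟩ := hd2 C D D₁ i hDD₁
  by_cases hc : cs.IsRightDescent (d C D) i
  · refine (hdesc hc).elim hstep fun hC => ?_
    rw [hC] at IH
    have ht : cs.IsReflection ((d D E)⁻¹ * cs.simple i * d D E) :=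
      ⟨(d D E)⁻¹, i, by rw [inv_inv]⟩
    have hprod : d C D * (cs.simple i * d D E) * ((d D E)⁻¹ * cs.simple i * d D E) =
        d C D * d D E := by
      simp [mul_assoc]
    have hlt := cs.length_mul_lt_length_mul_simple_mul hc hi
    have := IH.mul_of_length_mul_lt ht (by rw [hprod, ← mul_assoc]; exact hlt)
    rwa [hprod] at this
  · exact hstep (hasc hc)

end Building

/-- Let `(Δ, d)` be a building of type `W`. On the connected simply connected
groupoid with vertex set `Δ` (whose edges are ordered pairs of vertices, with
composition `(C,D)(D,E) = (C,E)`, identities `(C,C)` and inverses `(C,D)⁻¹ = (D,C)`),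
the function `δ'(C,D) = d(C,D)` is a strict `W`-groupoid: it is weak and satisfies
(WG1), (WG2), (WG3) and strictness, each expressed here in terms of pairs. -/
theorem stmt10 (cs : CoxeterSystem M W) (d : Δ → Δ → W)
    (hd1 : WD1 d) (hd2 : WD2 cs d) (hd3 : WD3 cs d) :
    -- weakness
    (∀ (C : Δ) (i : B), ∃ D : Δ, d C D = cs.simple i) ∧
    -- (WG1): identity edges have W-length 1
    (∀ C : Δ, d C C = 1) ∧
    -- (WG2): the triangle inequality for composable edges (C,D), (D,E)
    (∀ C D E : Δ, BruhatLE cs (d C D * d D E) (d C E)) ∧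
    -- (WG3): geodesic extension
    (∀ (C D : Δ) (i : B), cs.IsRightDescent (d C D) i →
      ∃ E : Δ, d E D = cs.simple i ∧ d C E = d C D * cs.simple i) ∧
    -- strictness: an edge of W-length 1 is an identity edge
    (∀ C D : Δ, d C D = 1 → C = D) := by
  refine ⟨fun C i => ?_, fun C => (hd1 C C).mpr rfl, bruhatLE_dist_mul_dist hd1 hd2 hd3,
    fun C D i _ => ?_, fun C D => (hd1 C D).mp⟩
  · obtain ⟨D, hD, -⟩ := hd3 C C i
    exact ⟨D, hD⟩
  · obtain ⟨E, hDE, hCE⟩ := hd3 C D i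
    exact ⟨E, dist_swap_of_eq_simple hd1 hd2 hDE, hCE⟩
end
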